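/- Let Ω ⊆ ℝⁿ be a nonempty closed convex set, F : ℝⁿ → ℝⁿ continuous and monotone on Ω, and let φ : ℝⁿ → ℝ ∪ {+∞} be convex with effective domain Ω and continuous on Ω, with 0 ∈ ri(dom ∂φ − Ω). Suppose x̄ ∈ S_φ and λ̄ ≥ 0 satisfy the Lagrangian optimality condition 0 ∈ ∂φ(x̄) + λ̄ ∂G(x̄) + N_Ω(x̄). If λ̄ = 0, then S₀ ∩ S_ε = S_φ for every ε > 0. If λ̄ > 0 and in addition S₀ is nonempty and closed, 0 ∈ ri(dom ∂φ − S₀), and F is coercive with respect to Ω, then S_φ = S₀ ∩ S_{Gεφ} for all ε ∈ (0, 1/λ̄]. -/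

import Mathlib

open Set Pointwise
open scoped InnerProductSpace

/-- The dual gap function `G(x) = sup_{y ∈ Ω} ⟨F(y), x − y⟩`, valued in `EReal`. -/
noncomputable def dualGap {n : ℕ} (Ω : Set (EuclideanSpace ℝ (Fin n)))
    (F : EuclideanSpace ℝ (Fin n) → EuclideanSpace ℝ (Fin n))
    (x : EuclideanSpace ℝ (Fin n)) : EReal :=
  ⨆ y ∈ Ω, ((⟪F y, x - y⟫_ℝ : ℝ) : EReal)

/-- The (convex) subdifferential of φ (viewed as the extended function equal to φ on
Ω and +∞ outside of Ω, so that its effective domain is Ω). -/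
def subdiffOn {n : ℕ} (Ω : Set (EuclideanSpace ℝ (Fin n)))
    (φ : EuclideanSpace ℝ (Fin n) → ℝ) (x : EuclideanSpace ℝ (Fin n)) :
    Set (EuclideanSpace ℝ (Fin n)) :=
  {v | x ∈ Ω ∧ ∀ y ∈ Ω, φ x + ⟪v, y - x⟫_ℝ ≤ φ y}

/-- The subdifferential of the (EReal-valued) dual gap function G. -/
noncomputable def subdiffG {n : ℕ} (Ω : Set (EuclideanSpace ℝ (Fin n)))
    (F : EuclideanSpace ℝ (Fin n) → EuclideanSpace ℝ (Fin n))
    (x : EuclideanSpace ℝ (Fin n)) : Set (EuclideanSpace ℝ (Fin n)) :=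
  {w | ∀ y, dualGap Ω F x + ((⟪w, y - x⟫_ℝ : ℝ) : EReal) ≤ dualGap Ω F y}

/-- The normal cone to Ω at x̄. -/
def normalCone {n : ℕ} (Ω : Set (EuclideanSpace ℝ (Fin n)))
    (x : EuclideanSpace ℝ (Fin n)) : Set (EuclideanSpace ℝ (Fin n)) :=
  {v | ∀ z ∈ Ω, ⟪v, z - x⟫_ℝ ≤ 0}

/-!
If `x̄ ∈ S_φ` with subgradient `v`, then `S_φ = {x ∈ S₀ | φ x ≤ φ x̄}`, and `v` remains a
subgradient at each such `x` with `⟪v, x - x̄⟫ = 0`. Testing `a + λ̄ b + c = 0` against `z - x̄`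
gives `φ x̄ ≤ φ z + λ̄ ⟪b, z - x̄⟫` on `Ω`. For `λ̄ = 0`, `a = -c` witnesses `S_ε` at every point of
`S_φ`; conversely monotonicity gives `⟪F x, z - x⟫ = 0` on `S₀`, so the `S_ε` condition restricted
to `S₀` is the `S_φ` condition. For `λ̄ > 0`, `G` vanishes on `S₀`, so `⟪b, z - x̄⟫ ≤ G z`; as
also `0 ≤ G z` and `0 < ε λ̄ ≤ 1`, we get `ε λ̄ ⟪b, z - x̄⟫ ≤ G z`, so `S_φ` minimizes `G + εφ`.
-/

section

variable {n : ℕ} {Ω : Set (EuclideanSpace ℝ (Fin n))}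
  {F : EuclideanSpace ℝ (Fin n) → EuclideanSpace ℝ (Fin n)}
  {φ : EuclideanSpace ℝ (Fin n) → ℝ} {x xbar z a b c v : EuclideanSpace ℝ (Fin n)}

/-- `S₀`, the solution set of the variational inequality `VI(F, Ω)`. -/
def viSol (Ω : Set (EuclideanSpace ℝ (Fin n)))
    (F : EuclideanSpace ℝ (Fin n) → EuclideanSpace ℝ (Fin n)) :
    Set (EuclideanSpace ℝ (Fin n)) :=
  {x | x ∈ Ω ∧ ∀ y ∈ Ω, 0 ≤ ⟪F x, y - x⟫_ℝ}

/-- `S_ε`, the solution set of the regularized inequality `VI(F + ε ∂φ, Ω)`. -/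
def regViSol (Ω : Set (EuclideanSpace ℝ (Fin n)))
    (F : EuclideanSpace ℝ (Fin n) → EuclideanSpace ℝ (Fin n))
    (φ : EuclideanSpace ℝ (Fin n) → ℝ) (ε : ℝ) : Set (EuclideanSpace ℝ (Fin n)) :=
  {x | x ∈ Ω ∧ ∃ v ∈ subdiffOn Ω φ x, ∀ z ∈ Ω, 0 ≤ ⟪F x + ε • v, z - x⟫_ℝ}

/-- `S_φ`, the solution set of the bilevel problem `GVI(∂φ, S₀)`. -/
def bilevelSol (Ω : Set (EuclideanSpace ℝ (Fin n)))
    (F : EuclideanSpace ℝ (Fin n) → EuclideanSpace ℝ (Fin n))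
    (φ : EuclideanSpace ℝ (Fin n) → ℝ) : Set (EuclideanSpace ℝ (Fin n)) :=
  {x | x ∈ viSol Ω F ∧ ∃ v ∈ subdiffOn Ω φ x, ∀ z ∈ viSol Ω F, 0 ≤ ⟪v, z - x⟫_ℝ}

/-- `S_{Gεφ}`, the minimizers of `G + εφ` over `Ω`. -/
def gapRegArgmin (Ω : Set (EuclideanSpace ℝ (Fin n)))
    (F : EuclideanSpace ℝ (Fin n) → EuclideanSpace ℝ (Fin n))
    (φ : EuclideanSpace ℝ (Fin n) → ℝ) (ε : ℝ) : Set (EuclideanSpace ℝ (Fin n)) :=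
  {x | x ∈ Ω ∧ ∀ z ∈ Ω, dualGap Ω F x + ((ε * φ x : ℝ) : EReal) ≤
    dualGap Ω F z + ((ε * φ z : ℝ) : EReal)}

theorem EReal.coe_mul_le_of_le {s t : ℝ} {g : EReal} (hs₀ : 0 ≤ s) (hs₁ : s ≤ 1)
    (hg : 0 ≤ g) (ht : (t : EReal) ≤ g) : ((s * t : ℝ) : EReal) ≤ g := by
  rcases le_total t 0 with h | h
  · exact le_trans (EReal.coe_nonpos.mpr (mul_nonpos_of_nonneg_of_nonpos hs₀ h)) hg
  · exact le_trans (EReal.coe_le_coe_iff.mpr (mul_le_of_le_one_left h hs₁)) ht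

theorem dualGap_nonneg (hx : x ∈ Ω) : 0 ≤ dualGap Ω F x := by
  have h : ((⟪F x, x - x⟫_ℝ : ℝ) : EReal) ≤ dualGap Ω F x := le_iSup₂_of_le x hx le_rfl
  simpa using h

theorem inner_sub_eq_zero_of_mem_viSol
    (hF : ∀ x ∈ Ω, ∀ y ∈ Ω, 0 ≤ ⟪F x - F y, x - y⟫_ℝ)
    (hx : x ∈ viSol Ω F) (hz : z ∈ viSol Ω F) : ⟪F x, z - x⟫_ℝ = 0 := by
  have hmono := hF x hx.1 z hz.1
  have hxz := hx.2 z hz.1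
  have hzx := hz.2 x hx.1
  simp only [inner_sub_left, inner_sub_right] at hmono hxz hzx ⊢
  linarith

theorem dualGap_eq_zero_of_mem_viSol
    (hF : ∀ x ∈ Ω, ∀ y ∈ Ω, 0 ≤ ⟪F x - F y, x - y⟫_ℝ) (hx : x ∈ viSol Ω F) :
    dualGap Ω F x = 0 := by
  refine le_antisymm (iSup₂_le fun y hy => ?_) (dualGap_nonneg hx.1)
  have hmono := hF y hy x hx.1
  have hxy := hx.2 y hy
  have : ⟪F y, x - y⟫_ℝ ≤ 0 := by
    simp only [inner_sub_left, inner_sub_right] at hmono hxy ⊢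
    linarith [real_inner_comm (F y) x, real_inner_comm (F x) y]
  exact_mod_cast this

theorem le_of_mem_subdiffOn_of_inner_nonneg (hv : v ∈ subdiffOn Ω φ x) (hz : z ∈ Ω)
    (hvz : 0 ≤ ⟪v, z - x⟫_ℝ) : φ x ≤ φ z := by
  linarith [hv.2 z hz]

theorem inner_sub_eq_of_mem_subdiffOn (hv : v ∈ subdiffOn Ω φ xbar) (hx : x ∈ Ω)
    (hφ : φ x ≤ φ xbar) (hvx : 0 ≤ ⟪v, x - xbar⟫_ℝ) (z : EuclideanSpace ℝ (Fin n)) :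
    ⟪v, z - x⟫_ℝ = ⟪v, z - xbar⟫_ℝ := by
  have hvx' : ⟪v, x - xbar⟫_ℝ = 0 := by linarith [hv.2 x hx]
  rw [← sub_sub_sub_cancel_right z x xbar, inner_sub_right, hvx', sub_zero]

theorem mem_subdiffOn_of_le (hv : v ∈ subdiffOn Ω φ xbar) (hx : x ∈ Ω)
    (hφ : φ x ≤ φ xbar) (hvx : 0 ≤ ⟪v, x - xbar⟫_ℝ) : v ∈ subdiffOn Ω φ x := by
  refine ⟨hx, fun y hy => ?_⟩
  rw [inner_sub_eq_of_mem_subdiffOn hv hx hφ hvx]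
  linarith [hv.2 y hy]

theorem mem_bilevelSol_iff (hxbar : xbar ∈ bilevelSol Ω F φ) :
    x ∈ bilevelSol Ω F φ ↔ x ∈ viSol Ω F ∧ φ x ≤ φ xbar := by
  obtain ⟨hxbar₀, v, hv, hvmin⟩ := hxbar
  refine ⟨fun ⟨hx₀, w, hw, hwmin⟩ => ⟨hx₀, ?_⟩, fun ⟨hx₀, hφ⟩ => ⟨hx₀, v, ?_, fun z hz => ?_⟩⟩
  · exact le_of_mem_subdiffOn_of_inner_nonneg hw hxbar₀.1 (hwmin xbar hxbar₀)
  · exact mem_subdiffOn_of_le hv hx₀.1 hφ (hvmin x hx₀)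
  · rw [inner_sub_eq_of_mem_subdiffOn hv hx₀.1 hφ (hvmin x hx₀)]
    exact hvmin z hz

theorem le_add_mul_inner_of_lagrange {lam : ℝ} (ha : a ∈ subdiffOn Ω φ xbar)
    (hc : c ∈ normalCone Ω xbar) (habc : a + lam • b + c = 0) (hz : z ∈ Ω) :
    φ xbar ≤ φ z + lam * ⟪b, z - xbar⟫_ℝ := by
  have : ⟪a, z - xbar⟫_ℝ + lam * ⟪b, z - xbar⟫_ℝ + ⟪c, z - xbar⟫_ℝ = 0 := by
    rw [← real_inner_smul_left, ← inner_add_left, ← inner_add_left, habc, inner_zero_left]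
  linarith [ha.2 z hz, hc z hz]

theorem viSol_inter_regViSol_eq_bilevelSol
    (hF : ∀ x ∈ Ω, ∀ y ∈ Ω, 0 ≤ ⟪F x - F y, x - y⟫_ℝ) (hxbar : xbar ∈ bilevelSol Ω F φ)
    (ha : a ∈ subdiffOn Ω φ xbar) (hc : c ∈ normalCone Ω xbar) (hac : a + c = 0)
    {ε : ℝ} (hε : 0 < ε) :
    viSol Ω F ∩ regViSol Ω F φ ε = bilevelSol Ω F φ := by
  have ha_nonneg : ∀ z ∈ Ω, 0 ≤ ⟪a, z - xbar⟫_ℝ := fun z hz => by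
    rw [eq_neg_of_add_eq_zero_left hac, inner_neg_left]
    linarith [hc z hz]
  ext x
  constructor
  · rintro ⟨hx₀, -, w, hw, hwε⟩
    refine ⟨hx₀, w, hw, fun z hz => ?_⟩
    have := hwε z hz.1
    rw [inner_add_left, inner_sub_eq_zero_of_mem_viSol hF hx₀ hz, real_inner_smul_left,
      zero_add] at this
    exact nonneg_of_mul_nonneg_right this hε
  · intro hx
    obtain ⟨hx₀, hφ⟩ := (mem_bilevelSol_iff hxbar).1 hx
    have hax := ha_nonneg x hx₀.1
    refine ⟨hx₀, hx₀.1, a, mem_subdiffOn_of_le ha hx₀.1 hφ hax, fun z hz => ?_⟩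
    rw [inner_add_left, real_inner_smul_left, inner_sub_eq_of_mem_subdiffOn ha hx₀.1 hφ hax]
    exact add_nonneg (hx₀.2 z hz) (mul_nonneg hε.le (ha_nonneg z hz))

theorem bilevelSol_eq_viSol_inter_gapRegArgmin
    (hF : ∀ x ∈ Ω, ∀ y ∈ Ω, 0 ≤ ⟪F x - F y, x - y⟫_ℝ) (hxbar : xbar ∈ bilevelSol Ω F φ)
    {lam : ℝ} (ha : a ∈ subdiffOn Ω φ xbar) (hb : b ∈ subdiffG Ω F xbar)
    (hc : c ∈ normalCone Ω xbar) (habc : a + lam • b + c = 0) (hlam : 0 < lam)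
    {ε : ℝ} (hε : 0 < ε) (hεlam : ε ≤ 1 / lam) :
    bilevelSol Ω F φ = viSol Ω F ∩ gapRegArgmin Ω F φ ε := by
  have hGxbar := dualGap_eq_zero_of_mem_viSol hF hxbar.1
  ext x
  constructor
  · intro hx
    obtain ⟨hx₀, hφ⟩ := (mem_bilevelSol_iff hxbar).1 hx
    refine ⟨hx₀, hx₀.1, fun z hz => ?_⟩
    have hbz : ((⟪b, z - xbar⟫_ℝ : ℝ) : EReal) ≤ dualGap Ω F z := by
      simpa [hGxbar] using hb z
    have hgap : ((ε * lam * ⟪b, z - xbar⟫_ℝ : ℝ) : EReal) ≤ dualGap Ω F z :=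
      EReal.coe_mul_le_of_le (by positivity) ((le_div_iff₀ hlam).1 hεlam)
        (dualGap_nonneg hz) hbz
    have hφz : ε * φ x ≤ ε * lam * ⟪b, z - xbar⟫_ℝ + ε * φ z := by
      nlinarith [le_add_mul_inner_of_lagrange ha hc habc hz]
    rw [dualGap_eq_zero_of_mem_viSol hF hx₀, zero_add]
    calc ((ε * φ x : ℝ) : EReal)
        ≤ ((ε * lam * ⟪b, z - xbar⟫_ℝ : ℝ) : EReal) + ((ε * φ z : ℝ) : EReal) := by
          exact_mod_cast hφz
      _ ≤ dualGap Ω F z + ((ε * φ z : ℝ) : EReal) := add_le_add_left hgap _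
  · rintro ⟨hx₀, -, hmin⟩
    refine (mem_bilevelSol_iff hxbar).2 ⟨hx₀, ?_⟩
    have := hmin xbar hxbar.1.1
    rw [dualGap_eq_zero_of_mem_viSol hF hx₀, hGxbar, zero_add, zero_add,
      EReal.coe_le_coe_iff] at this
    exact le_of_mul_le_mul_left this hε

end

theorem lagrange_multiplier_exact_regularization_general {n : ℕ}
    (Ω : Set (EuclideanSpace ℝ (Fin n)))
    (F : EuclideanSpace ℝ (Fin n) → EuclideanSpace ℝ (Fin n))
    (hFmono : ∀ x ∈ Ω, ∀ y ∈ Ω, 0 ≤ ⟪F x - F y, x - y⟫_ℝ)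
    (φ : EuclideanSpace ℝ (Fin n) → ℝ)
    (xbar : EuclideanSpace ℝ (Fin n)) (lam : ℝ)
    -- x̄ ∈ S_φ
    (hxbar : (xbar ∈ Ω ∧ ∀ y ∈ Ω, 0 ≤ ⟪F xbar, y - xbar⟫_ℝ) ∧
      ∃ v ∈ subdiffOn Ω φ xbar,
        ∀ z, (z ∈ Ω ∧ ∀ y ∈ Ω, 0 ≤ ⟪F z, y - z⟫_ℝ) → 0 ≤ ⟪v, z - xbar⟫_ℝ)
    -- Lagrangian optimality: 0 ∈ ∂φ(x̄) + λ̄ ∂G(x̄) + N_Ω(x̄)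
    (hlagrange : ∃ a ∈ subdiffOn Ω φ xbar, ∃ b ∈ subdiffG Ω F xbar,
      ∃ c ∈ normalCone Ω xbar, a + lam • b + c = 0) :
    (lam = 0 → ∀ ε : ℝ, 0 < ε →
      ({x | x ∈ Ω ∧ ∀ y ∈ Ω, 0 ≤ ⟪F x, y - x⟫_ℝ} ∩
        {x | x ∈ Ω ∧ ∃ v ∈ subdiffOn Ω φ x,
          ∀ z ∈ Ω, 0 ≤ ⟪F x + ε • v, z - x⟫_ℝ}) =
      {x | (x ∈ Ω ∧ ∀ y ∈ Ω, 0 ≤ ⟪F x, y - x⟫_ℝ) ∧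
        ∃ v ∈ subdiffOn Ω φ x,
          ∀ z, (z ∈ Ω ∧ ∀ y ∈ Ω, 0 ≤ ⟪F z, y - z⟫_ℝ) → 0 ≤ ⟪v, z - x⟫_ℝ}) ∧
    (0 < lam →
      ({x | x ∈ Ω ∧ ∀ y ∈ Ω, 0 ≤ ⟪F x, y - x⟫_ℝ}).Nonempty →
      IsClosed {x : (EuclideanSpace ℝ (Fin n)) |
        x ∈ Ω ∧ ∀ y ∈ Ω, 0 ≤ ⟪F x, y - x⟫_ℝ} →
      ((0 : EuclideanSpace ℝ (Fin n)) ∈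
        intrinsicInterior ℝ ({x | (subdiffOn Ω φ x).Nonempty} -
          {x | x ∈ Ω ∧ ∀ y ∈ Ω, 0 ≤ ⟪F x, y - x⟫_ℝ})) →
      (∃ γ : ℝ, 0 < γ ∧ ∀ x₀ ∈ Ω, ∃ c : ℝ, 0 < c ∧ ∃ R : ℝ,
        ∀ x ∈ Ω, R ≤ ‖x‖ → c ≤ ⟪F x, x - x₀⟫_ℝ / ‖x‖ ^ γ) →
      ∀ ε : ℝ, 0 < ε → ε ≤ 1 / lam →
        {x | (x ∈ Ω ∧ ∀ y ∈ Ω, 0 ≤ ⟪F x, y - x⟫_ℝ) ∧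
          ∃ v ∈ subdiffOn Ω φ x,
            ∀ z, (z ∈ Ω ∧ ∀ y ∈ Ω, 0 ≤ ⟪F z, y - z⟫_ℝ) → 0 ≤ ⟪v, z - x⟫_ℝ} =
        ({x | x ∈ Ω ∧ ∀ y ∈ Ω, 0 ≤ ⟪F x, y - x⟫_ℝ} ∩
          {x | x ∈ Ω ∧ ∀ z ∈ Ω, dualGap Ω F x + ((ε * φ x : ℝ) : EReal) ≤
            dualGap Ω F z + ((ε * φ z : ℝ) : EReal)})) := by
  obtain ⟨a, ha, b, hb, c, hc, habc⟩ := hlagrange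
  refine ⟨fun hlam0 ε hε => ?_, fun hlam _ _ _ _ ε hε hεlam =>
    bilevelSol_eq_viSol_inter_gapRegArgmin hFmono hxbar ha hb hc habc hlam hε hεlam⟩
  subst hlam0
  exact viSol_inter_regViSol_eq_bilevelSol hFmono hxbar ha hc (by simpa using habc) hε

/-- if x̄ ∈ S_φ and λ̄ ≥ 0 satisfy the Lagrangian optimality condition
0 ∈ ∂φ(x̄) + λ̄ ∂G(x̄) + N_Ω(x̄), then: if λ̄ = 0, S₀ ∩ S_ε = S_φ for every ε > 0;
if λ̄ > 0 and in addition S₀ is nonempty and closed, 0 ∈ ri(dom ∂φ − S₀) and F is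
coercive w.r.t. Ω, then S_φ = S₀ ∩ S_{Gεφ} for all ε ∈ (0, 1/λ̄]. -/
theorem lagrange_multiplier_exact_regularization {n : ℕ}
    (Ω : Set (EuclideanSpace ℝ (Fin n)))
    (hne : Ω.Nonempty) (hcl : IsClosed Ω) (hconv : Convex ℝ Ω)
    (F : EuclideanSpace ℝ (Fin n) → EuclideanSpace ℝ (Fin n))
    (hFcont : ContinuousOn F Ω)
    (hFmono : ∀ x ∈ Ω, ∀ y ∈ Ω, 0 ≤ ⟪F x - F y, x - y⟫_ℝ)
    (φ : EuclideanSpace ℝ (Fin n) → ℝ)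
    (hφconv : ConvexOn ℝ Ω φ) (hφcont : ContinuousOn φ Ω)
    (hri : (0 : EuclideanSpace ℝ (Fin n)) ∈
      intrinsicInterior ℝ ({x | (subdiffOn Ω φ x).Nonempty} - Ω))
    (xbar : EuclideanSpace ℝ (Fin n)) (lam : ℝ) (hlam : 0 ≤ lam)
    -- x̄ ∈ S_φ
    (hxbar : (xbar ∈ Ω ∧ ∀ y ∈ Ω, 0 ≤ ⟪F xbar, y - xbar⟫_ℝ) ∧
      ∃ v ∈ subdiffOn Ω φ xbar,
        ∀ z, (z ∈ Ω ∧ ∀ y ∈ Ω, 0 ≤ ⟪F z, y - z⟫_ℝ) → 0 ≤ ⟪v, z - xbar⟫_ℝ)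
    -- Lagrangian optimality: 0 ∈ ∂φ(x̄) + λ̄ ∂G(x̄) + N_Ω(x̄)
    (hlagrange : ∃ a ∈ subdiffOn Ω φ xbar, ∃ b ∈ subdiffG Ω F xbar,
      ∃ c ∈ normalCone Ω xbar, a + lam • b + c = 0) :
    (lam = 0 → ∀ ε : ℝ, 0 < ε →
      ({x | x ∈ Ω ∧ ∀ y ∈ Ω, 0 ≤ ⟪F x, y - x⟫_ℝ} ∩
        {x | x ∈ Ω ∧ ∃ v ∈ subdiffOn Ω φ x,
          ∀ z ∈ Ω, 0 ≤ ⟪F x + ε • v, z - x⟫_ℝ}) =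
      {x | (x ∈ Ω ∧ ∀ y ∈ Ω, 0 ≤ ⟪F x, y - x⟫_ℝ) ∧
        ∃ v ∈ subdiffOn Ω φ x,
          ∀ z, (z ∈ Ω ∧ ∀ y ∈ Ω, 0 ≤ ⟪F z, y - z⟫_ℝ) → 0 ≤ ⟪v, z - x⟫_ℝ}) ∧
    (0 < lam →
      ({x | x ∈ Ω ∧ ∀ y ∈ Ω, 0 ≤ ⟪F x, y - x⟫_ℝ}).Nonempty →
      IsClosed {x : (EuclideanSpace ℝ (Fin n)) |
        x ∈ Ω ∧ ∀ y ∈ Ω, 0 ≤ ⟪F x, y - x⟫_ℝ} →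
      ((0 : EuclideanSpace ℝ (Fin n)) ∈
        intrinsicInterior ℝ ({x | (subdiffOn Ω φ x).Nonempty} -
          {x | x ∈ Ω ∧ ∀ y ∈ Ω, 0 ≤ ⟪F x, y - x⟫_ℝ})) →
      (∃ γ : ℝ, 0 < γ ∧ ∀ x₀ ∈ Ω, ∃ c : ℝ, 0 < c ∧ ∃ R : ℝ,
        ∀ x ∈ Ω, R ≤ ‖x‖ → c ≤ ⟪F x, x - x₀⟫_ℝ / ‖x‖ ^ γ) →
      ∀ ε : ℝ, 0 < ε → ε ≤ 1 / lam →
        {x | (x ∈ Ω ∧ ∀ y ∈ Ω, 0 ≤ ⟪F x, y - x⟫_ℝ) ∧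
          ∃ v ∈ subdiffOn Ω φ x,
            ∀ z, (z ∈ Ω ∧ ∀ y ∈ Ω, 0 ≤ ⟪F z, y - z⟫_ℝ) → 0 ≤ ⟪v, z - x⟫_ℝ} =
        ({x | x ∈ Ω ∧ ∀ y ∈ Ω, 0 ≤ ⟪F x, y - x⟫_ℝ} ∩
          {x | x ∈ Ω ∧ ∀ z ∈ Ω, dualGap Ω F x + ((ε * φ x : ℝ) : EReal) ≤
            dualGap Ω F z + ((ε * φ z : ℝ) : EReal)})) :=
  lagrange_multiplier_exact_regularization_general Ω F hFmono φ xbar lam hxbar hlagrange
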